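/- There exists a constant C > 0 such that for every integer ℓ ≥ 2, the sum over all integers m with |m| ≤ ℓ−2 and ℓ−m even of ( A_{ℓ,m} − (2/√π)·(1−(m/ℓ)²)^{−1/4} )², plus 2·A_{ℓ,ℓ}², is at most C·ℓ^{2/3}. -/

import Mathlib

set_option maxHeartbeats 1000000
open Real Finset

/-- γ(x) = Γ(x/2 + 1/2) / Γ(x/2 + 1). -/
noncomputable def gam (x : ℝ) : ℝ := Real.Gamma (x/2 + 1/2) / Real.Gamma (x/2 + 1)

/-- A_{ℓ,m} = sqrt(((2ℓ+1)/π)·γ(ℓ−m)·γ(ℓ+m)) if |m| ≤ ℓ and ℓ−m is even, else 0. -/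
noncomputable def Acoef (ℓ : ℕ) (m : ℤ) : ℝ :=
  if |m| ≤ (ℓ : ℤ) ∧ Even ((ℓ : ℤ) - m) then
    Real.sqrt ((2*(ℓ:ℝ)+1)/Real.pi * gam ((ℓ : ℝ) - (m : ℝ)) * gam ((ℓ : ℝ) + (m : ℝ)))
  else 0


lemma Gamma_sq_le {y : ℝ} (hy : 0 < y) :
    Real.Gamma (y + 1/2) ^ 2 ≤ Real.Gamma y * Real.Gamma (y + 1) := by
  have h1 : (0:ℝ) < y + 1 := by linarith
  have h := Real.convexOn_log_Gamma.2 (Set.mem_Ioi.2 hy) (Set.mem_Ioi.2 h1)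
    (by norm_num : (0:ℝ) ≤ 1/2) (by norm_num : (0:ℝ) ≤ 1/2) (by norm_num)
  simp only [Function.comp_apply, smul_eq_mul] at h
  have heq : (1/2:ℝ) * y + 1/2 * (y+1) = y + 1/2 := by ring
  rw [heq] at h
  have hg1 : 0 < Real.Gamma y := Real.Gamma_pos_of_pos hy
  have hg2 : 0 < Real.Gamma (y+1) := Real.Gamma_pos_of_pos h1
  have hg3 : 0 < Real.Gamma (y+1/2) := Real.Gamma_pos_of_pos (by linarith)
  have : Real.log (Real.Gamma (y+1/2) ^ 2) ≤ Real.log (Real.Gamma y * Real.Gamma (y+1)) := by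
    rw [Real.log_pow, Real.log_mul hg1.ne' hg2.ne']
    push_cast
    linarith
  exact (Real.log_le_log_iff (by positivity) (by positivity)).1 this


lemma gam_pos {x : ℝ} (hx : 0 ≤ x) : 0 < gam x := by
  unfold gam
  have h1 : 0 < Real.Gamma (x/2 + 1/2) := Real.Gamma_pos_of_pos (by linarith)
  have h2 : 0 < Real.Gamma (x/2 + 1) := Real.Gamma_pos_of_pos (by linarith)
  positivity

lemma gam_sq_le {x : ℝ} (hx : 0 < x) : gam x ^ 2 ≤ 2 / x := by
  have hy : (0:ℝ) < x/2 := by linarith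
  have h := Gamma_sq_le hy
  have hrec : Real.Gamma (x/2 + 1) = (x/2) * Real.Gamma (x/2) :=
    Real.Gamma_add_one hy.ne'
  have hg2 : 0 < Real.Gamma (x/2 + 1) := Real.Gamma_pos_of_pos (by linarith)
  have hg0 : 0 < Real.Gamma (x/2) := Real.Gamma_pos_of_pos hy
  unfold gam
  rw [div_pow, div_le_div_iff₀ (by positivity) hx]
  have : Real.Gamma (x/2) = Real.Gamma (x/2+1) / (x/2) := by
    rw [hrec]; field_simp
  rw [this] at h
  calc Real.Gamma (x/2 + 1/2) ^ 2 * x ≤ (Real.Gamma (x/2+1) / (x/2) * Real.Gamma (x/2+1)) * x := by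
        nlinarith [hx]
    _ = 2 * Real.Gamma (x/2 + 1) ^ 2 := by field_simp

lemma le_gam_sq {x : ℝ} (hx : 0 ≤ x) : 2 / (x+1) ≤ gam x ^ 2 := by
  have hy : (0:ℝ) < x/2 + 1/2 := by linarith
  have h := Gamma_sq_le hy
  have heq1 : x/2 + 1/2 + 1/2 = x/2 + 1 := by ring
  have heq2 : x/2 + 1/2 + 1 = (x/2 + 1/2) + 1 := by ring
  rw [heq1, heq2, Real.Gamma_add_one hy.ne'] at h
  have hg1 : 0 < Real.Gamma (x/2 + 1/2) := Real.Gamma_pos_of_pos hy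
  have hg2 : 0 < Real.Gamma (x/2 + 1) := Real.Gamma_pos_of_pos (by linarith)
  unfold gam
  rw [div_pow, le_div_iff₀ (by positivity), div_mul_eq_mul_div, div_le_iff₀ (by linarith)]
  nlinarith [h]

lemma gam_le {x : ℝ} (hx : 0 < x) : gam x ≤ Real.sqrt (2/x) := by
  have h := gam_sq_le hx
  have hp := gam_pos hx.le
  calc gam x = Real.sqrt ((gam x)^2) := (Real.sqrt_sq hp.le).symm
    _ ≤ Real.sqrt (2/x) := Real.sqrt_le_sqrt h

lemma le_gam {x : ℝ} (hx : 0 ≤ x) : Real.sqrt (2/(x+1)) ≤ gam x := by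
  have h := le_gam_sq hx
  have hp := gam_pos hx
  calc Real.sqrt (2/(x+1)) ≤ Real.sqrt ((gam x)^2) := Real.sqrt_le_sqrt h
    _ = gam x := Real.sqrt_sq hp.le

lemma sqrt_four_div {w : ℝ} (hw : 0 < w) : Real.sqrt (4/w) = 2/Real.sqrt w := by
  have hsw : 0 < Real.sqrt w := Real.sqrt_pos.2 hw
  have : (4:ℝ)/w = (2/Real.sqrt w)^2 := by
    rw [div_pow, Real.sq_sqrt hw.le]; norm_num
  rw [this, Real.sqrt_sq (by positivity)]

lemma gam_mul_le {x y : ℝ} (hx : 0 < x) (hy : 0 < y) :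
    gam x * gam y ≤ 2 / Real.sqrt (x*y) := by
  have h := mul_le_mul (gam_le hx) (gam_le hy) (gam_pos hy.le).le (Real.sqrt_nonneg _)
  refine le_trans h ?_
  rw [← Real.sqrt_mul (by positivity)]
  have heq : (2/x)*(2/y) = 4/(x*y) := by
    rw [div_mul_div_comm]; norm_num
  rw [heq, sqrt_four_div (by positivity)]

lemma le_gam_mul {x y : ℝ} (hx : 0 ≤ x) (hy : 0 ≤ y) :
    2 / Real.sqrt ((x+1)*(y+1)) ≤ gam x * gam y := by
  have h := mul_le_mul (le_gam hx) (le_gam hy) (Real.sqrt_nonneg _) (gam_pos hx).le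
  refine le_trans ?_ h
  rw [← Real.sqrt_mul (by positivity)]
  have heq : (2/(x+1))*(2/(y+1)) = 4/((x+1)*(y+1)) := by
    rw [div_mul_div_comm]; norm_num
  rw [heq, sqrt_four_div (by positivity)]


lemma le_of_sq_le_sq' (x y : ℝ) (hx : 0 ≤ x) (hy : 0 ≤ y) (h : x^2 ≤ y^2) : x ≤ y := by
  nlinarith [sq_nonneg (x+y), sq_nonneg (x-y)]

lemma poly1 (L D sD : ℝ) (hL : 2 ≤ L) (hDL2 : D ≤ L^2) (hsD : 0 < sD) (hπ : 3 ≤ Real.pi) :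
    2 * (Real.pi * (D * sD)) ≤ (2*L+1)^2 * (Real.pi * sD) := by
  have hπ0 : 0 < Real.pi := by linarith
  have h1 : D ≤ (2*L+1)^2 / 2 := by nlinarith
  nlinarith [mul_pos hπ0 hsD]

lemma poly2 (L D sD u : ℝ) (hL : 2 ≤ L) (hD4 : 4 ≤ D) (hsD : 0 < sD)
    (hπ : 0 < Real.pi) (h2Du : 2*D*u = 2*L+1) :
    (4*L - 2*(2*L+1)*(1-u)) * (Real.pi * (D * sD)) ≤ (2*L+1)^2 * (Real.pi * sD) := by
  have h1 : (4*L - 2*(2*L+1)*(1-u)) * D = -2*D + (2*L+1)^2 := by nlinarith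
  have h2 : (4*L - 2*(2*L+1)*(1-u)) * (Real.pi * (D * sD))
      = ((4*L - 2*(2*L+1)*(1-u)) * D) * (Real.pi * sD) := by ring
  rw [h2, h1]
  have : (0:ℝ) < Real.pi * sD := mul_pos hπ hsD
  nlinarith

lemma poly3 (L sL sD S : ℝ) (hL : 2 ≤ L) (hsL : sL^2 = L) (hsLpos : 0 < sL)
    (hsD : Real.sqrt 2 * sL ≤ sD) (hS : 2*L^2 ≤ S) (hπ : 3 ≤ Real.pi) :
    (2*L+1)^4 ≤ 12 * sL * S * L * Real.pi * sD := by
  set r := Real.sqrt 2 with hrdef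
  have hr2 : r^2 = 2 := Real.sq_sqrt (by norm_num)
  have hr0 : 0 ≤ r := Real.sqrt_nonneg 2
  have hr14 : (1.4:ℝ) ≤ r := by nlinarith
  have hπ0 : (0:ℝ) < Real.pi := by linarith
  have hS0 : (0:ℝ) ≤ S := by nlinarith
  have h1 : 12 * sL * S * L * Real.pi * (r * sL) ≤ 12 * sL * S * L * Real.pi * sD := by
    apply mul_le_mul_of_nonneg_left hsD
    positivity
  have h2 : 12 * sL * S * L * Real.pi * (r * sL) = 12 * r * (L*L) * S * Real.pi := by
    rw [← hsL]; ring
  have h3 : (2*L+1)^4 ≤ 12 * r * (L*L) * S * Real.pi := by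
    have hsq : (2*L+1)^2 ≤ 9 * (L*L) := by nlinarith
    have hL4 : (2*L+1)^4 ≤ 81 * (L*L)*(L*L) := by
      have h0 : (0:ℝ) ≤ (2*L+1)^2 := sq_nonneg _
      nlinarith [mul_self_le_mul_self h0 hsq]
    have step1 : 81 * (L*L)*(L*L) ≤ 12 * r * (L*L) * (2*L^2) * 3 := by
      nlinarith [mul_nonneg (show (0:ℝ) ≤ 72*r - 81 by linarith)
        (show (0:ℝ) ≤ (L*L)*(L*L) by positivity)]
    have step2 : 12 * r * (L*L) * (2*L^2) * 3 ≤ 12 * r * (L*L) * S * 3 := by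
      nlinarith [mul_nonneg (show (0:ℝ) ≤ 36*r*(L*L) by positivity)
        (show (0:ℝ) ≤ S - 2*L^2 by linarith)]
    have step3 : 12 * r * (L*L) * S * 3 ≤ 12 * r * (L*L) * S * Real.pi := by
      nlinarith [mul_nonneg (show (0:ℝ) ≤ 12*r*(L*L)*S by positivity)
        (show (0:ℝ) ≤ Real.pi - 3 by linarith)]
    linarith
  linarith [h2 ▸ h1, h3]

lemma key_est (L a b A z sL sD sD' : ℝ) (hL : 2 ≤ L) (ha : 2 ≤ a) (hb : 2 ≤ b)
    (hab : a + b = 2*L) (hA : 0 ≤ A) (hz : 0 ≤ z)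
    (hsL : sL^2 = L) (hsL0 : 0 ≤ sL)
    (hsD : sD^2 = a*b) (hsD0 : 0 ≤ sD)
    (hsD' : sD'^2 = (a+1)*(b+1)) (hsD'0 : 0 ≤ sD')
    (hA2le : A^2 ≤ 2*(2*L+1)/(Real.pi * sD))
    (hA2ge : 2*(2*L+1)/(Real.pi * sD') ≤ A^2)
    (hz2 : z^2 = 4*L/(Real.pi * sD)) :
    (A - z)^2 ≤ 3 * sL * (1/a^2 + 1/b^2) := by
  have hπ : (0:ℝ) < Real.pi := Real.pi_pos
  have hπ3 : (3:ℝ) ≤ Real.pi := by have := Real.pi_gt_three; linarith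
  have hD4 : (4:ℝ) ≤ a*b := by
    have := mul_le_mul ha hb (by norm_num : (0:ℝ) ≤ 2) (by linarith : (0:ℝ) ≤ a)
    linarith
  have hD2L : 2*L ≤ a*b := by
    have e : (0:ℝ) ≤ (a-2)*(b-2) := mul_nonneg (by linarith) (by linarith)
    have e2 : (a-2)*(b-2) = a*b - 2*a - 2*b + 4 := by ring
    linarith
  have hDL2 : a*b ≤ L^2 := by
    have e : (0:ℝ) ≤ (a-b)^2 := sq_nonneg _
    have e2 : (a-b)^2 = (a+b)^2 - 4*(a*b) := by ring
    have e3 : (a+b)^2 = 4*L^2 := by rw [hab]; ring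
    linarith
  have hsDpos : 0 < sD := by
    have h4 : 0 < sD^2 := by rw [hsD]; linarith
    have hne : sD ≠ 0 := by intro h; rw [h] at h4; simp at h4
    exact lt_of_le_of_ne hsD0 (Ne.symm hne)
  have hsLpos : 0 < sL := by
    have h4 : 0 < sL^2 := by rw [hsL]; linarith
    have hne : sL ≠ 0 := by intro h; rw [h] at h4; simp at h4
    exact lt_of_le_of_ne hsL0 (Ne.symm hne)
  have hsD'ge : sD ≤ sD' := by
    apply le_of_sq_le_sq' _ _ hsD0 hsD'0
    rw [hsD, hsD']
    have e : (a+1)*(b+1) = a*b + (a+b) + 1 := by ring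
    linarith
  have hsD'pos : 0 < sD' := lt_of_lt_of_le hsDpos hsD'ge
  have hsDsL : Real.sqrt 2 * sL ≤ sD := by
    apply le_of_sq_le_sq' _ _ (by positivity) hsD0
    have h2 : (Real.sqrt 2)^2 = 2 := Real.sq_sqrt (by norm_num)
    have : (Real.sqrt 2 * sL)^2 = 2 * L := by rw [mul_pow, h2, hsL]
    rw [this, hsD]; exact hD2L
  set u : ℝ := (2*L+1)/(2*(a*b)) with hudef
  have hDpos : (0:ℝ) < a*b := by linarith
  have hu : 0 ≤ u := by
    apply div_nonneg (by linarith) (by linarith)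
  have h2Du : 2*(a*b)*u = 2*L+1 := by
    rw [hudef]; field_simp
  have hsD'le : sD' ≤ sD + sD * u := by
    apply le_of_sq_le_sq' _ _ hsD'0 (by positivity)
    have hexp : (sD + sD*u)^2 = sD^2 + (2*(sD^2)*u) + sD^2*u^2 := by ring
    rw [hexp, hsD, hsD', h2Du]
    have h0 : 0 ≤ (a*b)*u^2 := mul_nonneg hDpos.le (sq_nonneg u)
    have e : (a+1)*(b+1) = a*b + (a+b) + 1 := by ring
    linarith
  have hratio : (1-u) * sD' ≤ sD := by
    have hprod : 0 ≤ u * (sD' - sD) := mul_nonneg hu (sub_nonneg.2 hsD'ge)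
    calc (1-u)*sD' = sD' - u*sD' := by ring
      _ ≤ (sD + sD*u) - u*sD' := by linarith
      _ = sD - u*(sD' - sD) := by ring
      _ ≤ sD := by linarith
  have hA2ge' : 2*(2*L+1)*(1-u)/(Real.pi * sD) ≤ A^2 := by
    refine le_trans ?_ hA2ge
    rw [div_le_div_iff₀ (by positivity) (by positivity)]
    calc 2*(2*L+1)*(1-u) * (Real.pi * sD') = (2*(2*L+1)*Real.pi) * ((1-u) * sD') := by ring
      _ ≤ (2*(2*L+1)*Real.pi) * sD :=
          mul_le_mul_of_nonneg_left hratio (by positivity)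
      _ = 2*(2*L+1)*(Real.pi * sD) := by ring
  have hdenpos : 0 < Real.pi * ((a*b) * sD) := by positivity
  set E : ℝ := (2*L+1)^2/(Real.pi * ((a*b) * sD)) with hEdef
  have h1 : A^2 - z^2 ≤ E := by
    have hstep : A^2 - z^2 ≤ 2/(Real.pi * sD) := by
      have h2' : 2*(2*L+1)/(Real.pi * sD) - 4*L/(Real.pi * sD) = 2/(Real.pi * sD) := by
        field_simp; ring
      rw [hz2]; linarith
    refine le_trans hstep ?_
    rw [hEdef, div_le_div_iff₀ (by positivity) hdenpos]
    exact poly1 L (a*b) sD hL hDL2 hsDpos hπ3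
  have h2 : z^2 - A^2 ≤ E := by
    have hstep : z^2 - A^2 ≤ (4*L - 2*(2*L+1)*(1-u))/(Real.pi * sD) := by
      rw [hz2]
      have heq : (4*L - 2*(2*L+1)*(1-u))/(Real.pi * sD)
          = 4*L/(Real.pi*sD) - 2*(2*L+1)*(1-u)/(Real.pi*sD) := by
        field_simp
      rw [heq]; linarith
    refine le_trans hstep ?_
    rw [hEdef, div_le_div_iff₀ (by positivity) hdenpos]
    exact poly2 L (a*b) sD u hL hD4 hsDpos hπ h2Du
  have hz2pos : 0 < z^2 := by
    rw [hz2]; positivity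
  have hE0 : 0 ≤ E := by
    rw [hEdef]; exact div_nonneg (sq_nonneg _) hdenpos.le
  have hmain : (A-z)^2 * z^2 ≤ E^2 := by
    have habs : (A^2 - z^2)^2 ≤ E^2 := sq_le_sq' (by linarith) h1
    have hzA : z^2 ≤ (A+z)^2 := by
      have h1' : (A+z)^2 = A^2 + 2*(A*z) + z^2 := by ring
      have h2' : 0 ≤ A*z := mul_nonneg hA hz
      have h3' : 0 ≤ A^2 := sq_nonneg A
      linarith
    calc (A-z)^2 * z^2 ≤ (A-z)^2 * (A+z)^2 :=
          mul_le_mul_of_nonneg_left hzA (sq_nonneg _)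
      _ = (A^2 - z^2)^2 := by ring
      _ ≤ E^2 := habs
  have hfin : E^2 ≤ (3 * sL * (1/a^2 + 1/b^2)) * z^2 := by
    rw [hz2, hEdef, div_pow, div_le_iff₀ (by positivity)]
    have hane : a ≠ 0 := by linarith
    have hbne : b ≠ 0 := by linarith
    have hexp : 3 * sL * (1/a^2 + 1/b^2) * (4*L/(Real.pi * sD)) * (Real.pi * ((a*b)*sD))^2
        = 12 * sL * (a^2+b^2) * L * Real.pi * sD := by
      field_simp
      ring
    rw [hexp]
    have hS : 2*L^2 ≤ a^2+b^2 := by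
      have e : (0:ℝ) ≤ (a-b)^2 := sq_nonneg _
      have e2 : (a-b)^2 = 2*(a^2+b^2) - (a+b)^2 := by ring
      have e3 : (a+b)^2 = 4*L^2 := by rw [hab]; ring
      linarith
    have h4 : ((2*L+1)^2)^2 = (2*L+1)^4 := by ring
    rw [h4]
    exact poly3 L sL sD (a^2+b^2) hL hsL hsLpos hsDsL hS hπ3
  calc (A-z)^2 = (A-z)^2 * z^2 / z^2 := by rw [mul_div_assoc, div_self hz2pos.ne', mul_one]
    _ ≤ (3 * sL * (1/a^2 + 1/b^2)) * z^2 / z^2 := by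
        exact div_le_div_of_nonneg_right (le_trans hmain hfin) hz2pos.le |>.trans_eq rfl
    _ = 3 * sL * (1/a^2 + 1/b^2) := by
        rw [mul_div_assoc, div_self hz2pos.ne', mul_one]


lemma sum_range_inv_sq_aux (n : ℕ) :
    ∑ i ∈ Finset.range n, (1:ℝ)/((i:ℝ)+2)^2 ≤ 1 - 1/((n:ℝ)+1) := by
  induction n with
  | zero => simp
  | succ n ih =>
    rw [Finset.sum_range_succ]
    have h0 : (0:ℝ) < (n:ℝ)+1 := by positivity
    have h1 : (1:ℝ)/((n:ℝ)+2)^2 ≤ 1/((n:ℝ)+1) - 1/((n:ℝ)+2) := by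
      have heq : (1:ℝ)/((n:ℝ)+1) - 1/((n:ℝ)+2) = 1/(((n:ℝ)+1)*((n:ℝ)+2)) := by
        field_simp
        ring
      rw [heq]
      apply one_div_le_one_div_of_le (by positivity)
      nlinarith
    push_cast
    have hnn : ((n:ℝ)+1+1) = (n:ℝ)+2 := by ring
    rw [hnn]
    linarith

lemma sum_Icc_int_inv_sq (N : ℤ) : ∑ j ∈ Finset.Icc (2:ℤ) N, (1:ℝ)/(j:ℝ)^2 ≤ 1 := by
  rcases lt_or_ge N 2 with h | h
  · rw [Finset.Icc_eq_empty (by omega)]; simp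
  · have heq : ∑ j ∈ Finset.Icc (2:ℤ) N, (1:ℝ)/(j:ℝ)^2
        = ∑ i ∈ Finset.range (N-1).toNat, (1:ℝ)/((i:ℝ)+2)^2 := by
      refine Finset.sum_nbij' (fun j => (j-2).toNat) (fun i => (i:ℤ)+2) ?_ ?_ ?_ ?_ ?_
      · intro a ha; simp only [Finset.mem_Icc] at ha; simp only [Finset.mem_range]; omega
      · intro a ha; simp only [Finset.mem_range] at ha; simp only [Finset.mem_Icc]; omega
      · intro a ha; simp only [Finset.mem_Icc] at ha; omega
      · intro a ha; simp only [Finset.mem_range] at ha; omega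
      · intro a ha
        simp only [Finset.mem_Icc] at ha
        have hcast : (((a-2).toNat : ℕ) : ℝ) = (a:ℝ) - 2 := by
          have : ((a-2).toNat : ℤ) = a - 2 := Int.toNat_of_nonneg (by omega)
          exact_mod_cast congrArg (Int.cast : ℤ → ℝ) this
        rw [hcast]
        ring_nf
    rw [heq]
    refine le_trans (sum_range_inv_sq_aux _) ?_
    have : (0:ℝ) < ((N-1).toNat : ℝ) + 1 := by positivity
    have h2 : (0:ℝ) ≤ 1/(((N-1).toNat : ℝ) + 1) := by positivity
    linarith

lemma sum_shift_sub (ℓ : ℕ) :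
    ∑ m ∈ Finset.Icc (-(ℓ:ℤ)+2) ((ℓ:ℤ)-2), (1:ℝ)/((ℓ:ℝ)-(m:ℝ))^2 ≤ 1 := by
  have heq : ∑ m ∈ Finset.Icc (-(ℓ:ℤ)+2) ((ℓ:ℤ)-2), (1:ℝ)/((ℓ:ℝ)-(m:ℝ))^2
      = ∑ j ∈ Finset.Icc (2:ℤ) (2*(ℓ:ℤ)-2), (1:ℝ)/(j:ℝ)^2 := by
    refine Finset.sum_nbij' (fun m => (ℓ:ℤ) - m) (fun j => (ℓ:ℤ) - j) ?_ ?_ ?_ ?_ ?_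
    · intro a ha; simp only [Finset.mem_Icc] at ha ⊢; omega
    · intro a ha; simp only [Finset.mem_Icc] at ha ⊢; omega
    · intro a _; omega
    · intro a _; omega
    · intro a ha
      have : (((ℓ:ℤ) - a : ℤ) : ℝ) = (ℓ:ℝ) - (a:ℝ) := by push_cast; ring
      rw [this]
  rw [heq]
  exact sum_Icc_int_inv_sq _

lemma sum_shift_add (ℓ : ℕ) :
    ∑ m ∈ Finset.Icc (-(ℓ:ℤ)+2) ((ℓ:ℤ)-2), (1:ℝ)/((ℓ:ℝ)+(m:ℝ))^2 ≤ 1 := by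
  have heq : ∑ m ∈ Finset.Icc (-(ℓ:ℤ)+2) ((ℓ:ℤ)-2), (1:ℝ)/((ℓ:ℝ)+(m:ℝ))^2
      = ∑ j ∈ Finset.Icc (2:ℤ) (2*(ℓ:ℤ)-2), (1:ℝ)/(j:ℝ)^2 := by
    refine Finset.sum_nbij' (fun m => (ℓ:ℤ) + m) (fun j => j - (ℓ:ℤ)) ?_ ?_ ?_ ?_ ?_
    · intro a ha; simp only [Finset.mem_Icc] at ha ⊢; omega
    · intro a ha; simp only [Finset.mem_Icc] at ha ⊢; omega
    · intro a _; omega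
    · intro a _; omega
    · intro a ha
      have : (((ℓ:ℤ) + a : ℤ) : ℝ) = (ℓ:ℝ) + (a:ℝ) := by push_cast; ring
      rw [this]
  rw [heq]
  exact sum_Icc_int_inv_sq _

lemma Acoef_nonneg (ℓ : ℕ) (m : ℤ) : 0 ≤ Acoef ℓ m := by
  unfold Acoef
  split
  · exact Real.sqrt_nonneg _
  · exact le_refl 0

lemma Acoef_sq (ℓ : ℕ) (m : ℤ) (h1 : |m| ≤ (ℓ:ℤ)) (h2 : Even ((ℓ:ℤ) - m)) :
    Acoef ℓ m ^ 2 = (2*(ℓ:ℝ)+1)/Real.pi * gam ((ℓ:ℝ) - (m:ℝ)) * gam ((ℓ:ℝ) + (m:ℝ)) := by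
  have hm := abs_le.1 h1
  have ha : (0:ℝ) ≤ (ℓ:ℝ) - (m:ℝ) := by
    have : (m:ℝ) ≤ (ℓ:ℝ) := by exact_mod_cast hm.2
    linarith
  have hb : (0:ℝ) ≤ (ℓ:ℝ) + (m:ℝ) := by
    have : ((-(ℓ:ℤ) : ℤ):ℝ) ≤ (m:ℝ) := by exact_mod_cast hm.1
    push_cast at this
    linarith
  have hc : (0:ℝ) ≤ (2*(ℓ:ℝ)+1)/Real.pi := div_nonneg (by positivity) Real.pi_pos.le
  rw [Acoef, if_pos ⟨h1, h2⟩]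
  have hdiv : (2*(ℓ:ℝ)+1)/Real.pi = (2*(ℓ:ℝ)+1)/Real.pi := rfl
  exact Real.sq_sqrt (mul_nonneg (mul_nonneg hc (gam_pos ha).le) (gam_pos hb).le)

lemma term_bound (ℓ : ℕ) (hℓ : 2 ≤ ℓ) (m : ℤ)
    (hm1 : -(ℓ:ℤ)+2 ≤ m) (hm2 : m ≤ (ℓ:ℤ)-2) (hev : Even ((ℓ:ℤ) - m)) :
    (Acoef ℓ m - (2/Real.sqrt Real.pi) * (1 - ((m:ℝ)/(ℓ:ℝ))^2) ^ (-(1/4) : ℝ))^2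
      ≤ 3 * Real.sqrt (ℓ:ℝ) * (1/((ℓ:ℝ)-(m:ℝ))^2 + 1/((ℓ:ℝ)+(m:ℝ))^2) := by
  have hπ := Real.pi_pos
  set L : ℝ := (ℓ:ℝ) with hLdef
  have hL : 2 ≤ L := by rw [hLdef]; exact_mod_cast hℓ
  have hLpos : 0 < L := by linarith
  have hm1' : -L + 2 ≤ (m:ℝ) := by
    have : ((-(ℓ:ℤ)+2 : ℤ):ℝ) ≤ (m:ℝ) := by exact_mod_cast hm1
    push_cast at this
    linarith
  have hm2' : (m:ℝ) ≤ L - 2 := by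
    have : (m:ℝ) ≤ (((ℓ:ℤ)-2 : ℤ):ℝ) := by exact_mod_cast hm2
    push_cast at this
    linarith
  set a : ℝ := L - (m:ℝ) with hadef
  set b : ℝ := L + (m:ℝ) with hbdef
  have ha : 2 ≤ a := by rw [hadef]; linarith
  have hb : 2 ≤ b := by rw [hbdef]; linarith
  have hapos : 0 < a := by linarith
  have hbpos : 0 < b := by linarith
  have hab : a + b = 2*L := by rw [hadef, hbdef]; ring
  have habpos : 0 < a*b := mul_pos hapos hbpos
  have habs : |m| ≤ (ℓ:ℤ) := abs_le.mpr ⟨by omega, by omega⟩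
  have hA2 := Acoef_sq ℓ m habs hev
  have hA0 := Acoef_nonneg ℓ m
  have hc : (0:ℝ) ≤ (2*L+1)/Real.pi := div_nonneg (by linarith) hπ.le
  have hA2le : Acoef ℓ m ^2 ≤ 2*(2*L+1)/(Real.pi * Real.sqrt (a*b)) := by
    rw [hA2]
    calc (2*L+1)/Real.pi * gam a * gam b = (2*L+1)/Real.pi * (gam a * gam b) := by ring
      _ ≤ (2*L+1)/Real.pi * (2/Real.sqrt (a*b)) :=
          mul_le_mul_of_nonneg_left (gam_mul_le hapos hbpos) hc
      _ = 2*(2*L+1)/(Real.pi * Real.sqrt (a*b)) := by ring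
  have hA2ge : 2*(2*L+1)/(Real.pi * Real.sqrt ((a+1)*(b+1))) ≤ Acoef ℓ m ^2 := by
    rw [hA2]
    calc 2*(2*L+1)/(Real.pi * Real.sqrt ((a+1)*(b+1)))
        = (2*L+1)/Real.pi * (2/Real.sqrt ((a+1)*(b+1))) := by ring
      _ ≤ (2*L+1)/Real.pi * (gam a * gam b) :=
          mul_le_mul_of_nonneg_left (le_gam_mul hapos.le hbpos.le) hc
      _ = (2*L+1)/Real.pi * gam a * gam b := by ring
  set t : ℝ := 1 - ((m:ℝ)/L)^2 with htdef
  have htval : t = (a*b)/L^2 := by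
    rw [htdef, hadef, hbdef]
    field_simp
    ring
  have htpos : 0 < t := by rw [htval]; positivity
  have hz0 : 0 ≤ 2/Real.sqrt Real.pi * t^(-(1/4):ℝ) := by positivity
  have hz2 : (2/Real.sqrt Real.pi * t^(-(1/4):ℝ))^2 = 4*L/(Real.pi * Real.sqrt (a*b)) := by
    have h1 : (2/Real.sqrt Real.pi * t^(-(1/4):ℝ))^2
        = (4/Real.pi) * ((t^(-(1/4):ℝ))^2) := by
      rw [mul_pow, div_pow, Real.sq_sqrt hπ.le]
      norm_num
    have h2 : (t^(-(1/4):ℝ))^2 = t^(-(1/2):ℝ) := by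
      rw [← Real.rpow_natCast (t^(-(1/4):ℝ)) 2, ← Real.rpow_mul htpos.le]
      norm_num
    have h3 : t^(-(1/2):ℝ) = 1/Real.sqrt t := by
      rw [Real.rpow_neg htpos.le, Real.sqrt_eq_rpow]
      exact (one_div _).symm
    have h4 : Real.sqrt t = Real.sqrt (a*b) / L := by
      rw [htval]
      have he : a*b/L^2 = (Real.sqrt (a*b)/L)^2 := by
        rw [div_pow, Real.sq_sqrt habpos.le]
      rw [he, Real.sqrt_sq (by positivity)]
    rw [h1, h2, h3, h4]
    have hsab : 0 < Real.sqrt (a*b) := Real.sqrt_pos.2 habpos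
    field_simp
  exact key_est L a b (Acoef ℓ m) (2/Real.sqrt Real.pi * t^(-(1/4):ℝ))
    (Real.sqrt L) (Real.sqrt (a*b)) (Real.sqrt ((a+1)*(b+1)))
    hL ha hb hab hA0 hz0
    (Real.sq_sqrt hLpos.le) (Real.sqrt_nonneg _)
    (Real.sq_sqrt habpos.le) (Real.sqrt_nonneg _)
    (Real.sq_sqrt (by positivity)) (Real.sqrt_nonneg _)
    hA2le hA2ge hz2

lemma gam_zero : gam 0 = Real.sqrt Real.pi := by
  have e1 : (0:ℝ)/2 + 1/2 = 1/2 := by norm_num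
  have e2 : (0:ℝ)/2 + 1 = 1 := by norm_num
  unfold gam
  rw [e1, e2, Real.Gamma_one, Real.Gamma_one_half_eq, div_one]

lemma edge_bound (ℓ : ℕ) (hℓ : 2 ≤ ℓ) : Acoef ℓ (ℓ:ℤ) ^ 2 ≤ 2 * Real.sqrt (ℓ:ℝ) := by
  have hπ := Real.pi_pos
  have hπ3 : (3:ℝ) ≤ Real.pi := by have := Real.pi_gt_three; linarith
  set L : ℝ := (ℓ:ℝ) with hLdef
  have hL : 2 ≤ L := by rw [hLdef]; exact_mod_cast hℓ
  have hLpos : 0 < L := by linarith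
  have hA2 := Acoef_sq ℓ (ℓ:ℤ) (by simp) (by simp)
  have hcast : (((ℓ:ℤ)):ℝ) = L := by push_cast; rfl
  rw [hcast, sub_self] at hA2
  have hg0 : gam 0 = Real.sqrt Real.pi := gam_zero
  have hg2L : gam (L + L) ≤ 1/Real.sqrt L := by
    refine le_trans (gam_le (by linarith)) ?_
    have he : 2/(L+L) = 1/L := by
      rw [show L + L = 2*L by ring]
      field_simp
    rw [he, one_div, Real.sqrt_inv, one_div]
  have hc : (0:ℝ) ≤ (2*L+1)/Real.pi * Real.sqrt Real.pi :=
    mul_nonneg (div_nonneg (by linarith) hπ.le) (Real.sqrt_nonneg _)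
  have hstep : Acoef ℓ (ℓ:ℤ) ^2 ≤ (2*L+1)/Real.pi * Real.sqrt Real.pi * (1/Real.sqrt L) := by
    rw [hA2, hg0]
    exact mul_le_mul_of_nonneg_left hg2L hc
  refine le_trans hstep ?_
  set sπ := Real.sqrt Real.pi with hsπdef
  set sL := Real.sqrt L with hsLdef
  have hsπ2 : sπ^2 = Real.pi := Real.sq_sqrt hπ.le
  have hsπ0 : 0 ≤ sπ := Real.sqrt_nonneg _
  have hsL2 : sL^2 = L := Real.sq_sqrt hLpos.le
  have hsL0 : 0 < sL := Real.sqrt_pos.2 hLpos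
  have h17 : (1.7:ℝ) ≤ sπ := by nlinarith
  have heq : (2*L+1)/Real.pi * sπ * (1/sL) = ((2*L+1)*sπ)/(Real.pi*sL) := by
    field_simp
  rw [heq, div_le_iff₀ (by positivity)]
  have hgoal : (2*L+1)*sπ ≤ 2*L*sπ^2 := by
    have hin : 0 ≤ 2*L*sπ - 2*L - 1 := by
      nlinarith [mul_nonneg (by linarith : (0:ℝ) ≤ 2*L) (sub_nonneg.2 h17)]
    nlinarith [mul_nonneg hsπ0 hin]
  calc (2*L+1)*sπ ≤ 2*L*sπ^2 := hgoal
    _ = 2*sL*(Real.pi*sL) := by rw [hsπ2, ← hsL2]; ring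

theorem sum_sq_Acoef_minus_z_le :
    ∃ C > 0, ∀ ℓ : ℕ, 2 ≤ ℓ →
      (∑ m ∈ (Finset.Icc (-(ℓ:ℤ) + 2) ((ℓ:ℤ) - 2)).filter (fun m => Even ((ℓ:ℤ) - m)),
        (Acoef ℓ m - (2/Real.sqrt Real.pi) * (1 - ((m:ℝ)/(ℓ:ℝ))^2) ^ (-(1/4) : ℝ))^2)
      + 2 * (Acoef ℓ ℓ)^2 ≤ C * (ℓ:ℝ) ^ ((2:ℝ)/3) := by
  refine ⟨10, by norm_num, ?_⟩
  intro ℓ hℓ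
  have hL : (2:ℝ) ≤ (ℓ:ℝ) := by exact_mod_cast hℓ
  have hL1 : (1:ℝ) ≤ (ℓ:ℝ) := by linarith
  have hsL0 : 0 ≤ Real.sqrt (ℓ:ℝ) := Real.sqrt_nonneg _
  have hsum : (∑ m ∈ (Finset.Icc (-(ℓ:ℤ) + 2) ((ℓ:ℤ) - 2)).filter (fun m => Even ((ℓ:ℤ) - m)),
        (Acoef ℓ m - (2/Real.sqrt Real.pi) * (1 - ((m:ℝ)/(ℓ:ℝ))^2) ^ (-(1/4) : ℝ))^2)
      ≤ 6 * Real.sqrt (ℓ:ℝ) := by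
    have hstep1 : (∑ m ∈ (Finset.Icc (-(ℓ:ℤ) + 2) ((ℓ:ℤ) - 2)).filter (fun m => Even ((ℓ:ℤ) - m)),
          (Acoef ℓ m - (2/Real.sqrt Real.pi) * (1 - ((m:ℝ)/(ℓ:ℝ))^2) ^ (-(1/4) : ℝ))^2)
        ≤ ∑ m ∈ (Finset.Icc (-(ℓ:ℤ) + 2) ((ℓ:ℤ) - 2)).filter (fun m => Even ((ℓ:ℤ) - m)),
          3 * Real.sqrt (ℓ:ℝ) * (1/((ℓ:ℝ)-(m:ℝ))^2 + 1/((ℓ:ℝ)+(m:ℝ))^2) := by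
      refine Finset.sum_le_sum ?_
      intro m hm
      obtain ⟨hmem, hev⟩ := Finset.mem_filter.1 hm
      obtain ⟨h1, h2⟩ := Finset.mem_Icc.1 hmem
      exact term_bound ℓ hℓ m h1 h2 hev
    have hstep2 : (∑ m ∈ (Finset.Icc (-(ℓ:ℤ) + 2) ((ℓ:ℤ) - 2)).filter (fun m => Even ((ℓ:ℤ) - m)),
          3 * Real.sqrt (ℓ:ℝ) * (1/((ℓ:ℝ)-(m:ℝ))^2 + 1/((ℓ:ℝ)+(m:ℝ))^2))
        ≤ ∑ m ∈ Finset.Icc (-(ℓ:ℤ) + 2) ((ℓ:ℤ) - 2),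
          3 * Real.sqrt (ℓ:ℝ) * (1/((ℓ:ℝ)-(m:ℝ))^2 + 1/((ℓ:ℝ)+(m:ℝ))^2) := by
      refine Finset.sum_le_sum_of_subset_of_nonneg (Finset.filter_subset _ _) ?_
      intro i _ _
      positivity
    have hstep3 : (∑ m ∈ Finset.Icc (-(ℓ:ℤ) + 2) ((ℓ:ℤ) - 2),
          3 * Real.sqrt (ℓ:ℝ) * (1/((ℓ:ℝ)-(m:ℝ))^2 + 1/((ℓ:ℝ)+(m:ℝ))^2))
        ≤ 6 * Real.sqrt (ℓ:ℝ) := by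
      have hsplit : (∑ m ∈ Finset.Icc (-(ℓ:ℤ) + 2) ((ℓ:ℤ) - 2),
            3 * Real.sqrt (ℓ:ℝ) * (1/((ℓ:ℝ)-(m:ℝ))^2 + 1/((ℓ:ℝ)+(m:ℝ))^2))
          = 3 * Real.sqrt (ℓ:ℝ) * (∑ m ∈ Finset.Icc (-(ℓ:ℤ) + 2) ((ℓ:ℤ) - 2), (1:ℝ)/((ℓ:ℝ)-(m:ℝ))^2)
          + 3 * Real.sqrt (ℓ:ℝ) * (∑ m ∈ Finset.Icc (-(ℓ:ℤ) + 2) ((ℓ:ℤ) - 2), (1:ℝ)/((ℓ:ℝ)+(m:ℝ))^2) := by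
        simp only [mul_add]
        rw [Finset.sum_add_distrib, Finset.mul_sum, Finset.mul_sum]
      rw [hsplit]
      have hb1 := sum_shift_sub ℓ
      have hb2 := sum_shift_add ℓ
      have hc : (0:ℝ) ≤ 3 * Real.sqrt (ℓ:ℝ) := by positivity
      nlinarith [mul_le_mul_of_nonneg_left hb1 hc, mul_le_mul_of_nonneg_left hb2 hc]
    linarith
  have hedge := edge_bound ℓ hℓ
  have hpow : Real.sqrt (ℓ:ℝ) ≤ (ℓ:ℝ) ^ ((2:ℝ)/3) := by
    rw [Real.sqrt_eq_rpow]
    exact Real.rpow_le_rpow_of_exponent_le hL1 (by norm_num)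
  have htot : (∑ m ∈ (Finset.Icc (-(ℓ:ℤ) + 2) ((ℓ:ℤ) - 2)).filter (fun m => Even ((ℓ:ℤ) - m)),
        (Acoef ℓ m - (2/Real.sqrt Real.pi) * (1 - ((m:ℝ)/(ℓ:ℝ))^2) ^ (-(1/4) : ℝ))^2)
      + 2 * (Acoef ℓ ℓ)^2 ≤ 10 * Real.sqrt (ℓ:ℝ) := by
    linarith
  refine le_trans htot ?_
  linarith [hpow]
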